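/- Let n ≥ 3, let j ≥ 2 be a proper divisor of n, and suppose k = n/j is odd. Let ℓ₊^j(n) = {X ∈ S^{n−2} : ℛ_n^j X = X}, with the subspace topology. Then the quotient of ℓ₊^j(n) by the equivalence relation X ≈ Y iff Y = ±ℛ_n^l X for some l ∈ ℤ is homeomorphic to the quotient of the unit sphere S^{j−2} ⊆ ℝ^{j−1} by the equivalence relation U ≈' V iff V = ±ℛ_j^l U for some l ∈ ℤ (i.e., ℓ^j(n)/⟨ℛ_n, ν⟩ is homeomorphic to the space 𝓛(j)). -/

import Mathlib

noncomputable section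

/-- The block-rotation matrix `ℛ_m`: block diagonal with `2 × 2` rotation blocks
`R_{2π/m}, R_{2·2π/m}, …` (the block with index `b` rotates by `(b+1)·2π/m`), followed,
when `m` is even, by a final `1 × 1` entry `−1`. -/
def Rmat (m : ℕ) : Matrix (Fin (m - 1)) (Fin (m - 1)) ℝ :=
  Matrix.of fun i j =>
    let b : ℕ := (i : ℕ) / 2
    let θ : ℝ := 2 * Real.pi * ((b : ℝ) + 1) / m
    if (i : ℕ) % 2 = 0 then
      if (i : ℕ) + 1 < m - 1 then
        if (j : ℕ) = (i : ℕ) then Real.cos θ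
        else if (j : ℕ) = (i : ℕ) + 1 then -Real.sin θ else 0
      else
        if j = i then -1 else 0
    else
      if (j : ℕ) = (i : ℕ) - 1 then Real.sin θ
      else if (j : ℕ) = (i : ℕ) then Real.cos θ else 0

/-- `ℓ₊^j(n) = {X ∈ S^{n-2} : ℛ_n^j X = X}` as a subspace of `ℝ^{n-1}`. -/
abbrev ellPlus (n j : ℕ) : Type :=
  {X : Fin (n - 1) → ℝ // (∑ i, (X i) ^ 2 = 1) ∧ (Rmat n ^ j).mulVec X = X}

/-- The relation `X ≈ Y` on `ℓ₊^j(n)`: `Y = ±ℛ_n^l X` for some `l ∈ ℤ`. -/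
def apxRelPlus (n j : ℕ) (X Y : ellPlus n j) : Prop :=
  ∃ (l : ℤ) (ε : ℝ), (ε = 1 ∨ ε = -1) ∧
    (Y : Fin (n - 1) → ℝ) = ε • ((Rmat n ^ l).mulVec (X : Fin (n - 1) → ℝ))

/-- The relation `U ≈' V` on the unit sphere `S^{j-2} ⊆ ℝ^{j-1}`: `V = ±ℛ_j^l U`, `l ∈ ℤ`. -/
def apxRelSmall (j : ℕ) (U V : {v : Fin (j - 1) → ℝ // ∑ i, (v i) ^ 2 = 1}) : Prop :=
  ∃ (l : ℤ) (ε : ℝ), (ε = 1 ∨ ε = -1) ∧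
    (V : Fin (j - 1) → ℝ) = ε • ((Rmat j ^ l).mulVec U)

namespace EllPlusAux

/-- Angle of block `b` of `Rmat m`. -/
def ang (m b : ℕ) : ℝ := 2 * Real.pi * ((b : ℝ) + 1) / m

lemma sum_ite_coe (m : ℕ) (c : Fin (m - 1)) (f : Fin (m - 1) → ℝ) :
    ∑ p : Fin (m - 1), (if (p : ℕ) = (c : ℕ) then f p else 0) = f c := by
  have : ∀ p : Fin (m - 1), (if (p : ℕ) = (c : ℕ) then f p else 0)
      = if p = c then f p else 0 := by
    intro p; simp [Fin.ext_iff]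
  rw [Finset.sum_congr rfl fun p _ => this p, Finset.sum_ite_eq']
  simp

lemma Rmat_mulVec_even (m : ℕ) (X : Fin (m - 1) → ℝ) (a : Fin (m - 1))
    (ha : (a : ℕ) % 2 = 0) (h1 : (a : ℕ) + 1 < m - 1) :
    (Rmat m).mulVec X a =
      Real.cos (ang m ((a : ℕ) / 2)) * X a
        - Real.sin (ang m ((a : ℕ) / 2)) * X ⟨(a : ℕ) + 1, h1⟩ := by
  classical
  set θ := ang m ((a : ℕ) / 2) with hθ
  have key : ∀ p : Fin (m - 1), Rmat m a p * X p =
      (if p = a then Real.cos θ * X a else 0)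
        + (if p = (⟨(a : ℕ) + 1, h1⟩ : Fin (m - 1)) then
            -(Real.sin θ * X ⟨(a : ℕ) + 1, h1⟩) else 0) := by
    intro p
    have hθ' : (2 * Real.pi * (((a : ℕ) / 2 : ℕ) + 1) / m : ℝ) = θ := rfl
    simp only [Rmat, Matrix.of_apply, ha, h1, if_true, hθ']
    rcases eq_or_ne p a with hp | hp
    · subst hp
      simp [Fin.ext_iff]
    · rcases eq_or_ne p (⟨(a : ℕ) + 1, h1⟩ : Fin (m - 1)) with hq | hq
      · subst hq
        simp [Fin.ext_iff]
      · have h1' : ((p : ℕ) = (a : ℕ)) = False := by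
          simp [Fin.ext_iff] at hp; simp [hp]
        have h2' : ((p : ℕ) = (a : ℕ) + 1) = False := by
          simp [Fin.ext_iff] at hq; simp [hq]
        simp [h1', h2', hp, hq]
  have hs : (Rmat m).mulVec X a = ∑ p, Rmat m a p * X p := rfl
  rw [hs, Finset.sum_congr rfl (fun p _ => key p), Finset.sum_add_distrib,
    Finset.sum_ite_eq', Finset.sum_ite_eq']
  simp only [Finset.mem_univ, if_true]
  ring

lemma Rmat_mulVec_odd (m : ℕ) (X : Fin (m - 1) → ℝ) (a : Fin (m - 1))
    (ha : (a : ℕ) % 2 = 1) :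
    (Rmat m).mulVec X a =
      Real.sin (ang m ((a : ℕ) / 2)) * X ⟨(a : ℕ) - 1, lt_of_le_of_lt (Nat.sub_le _ _) a.2⟩
        + Real.cos (ang m ((a : ℕ) / 2)) * X a := by
  classical
  set θ := ang m ((a : ℕ) / 2) with hθdef
  set a0 : Fin (m - 1) := ⟨(a : ℕ) - 1, lt_of_le_of_lt (Nat.sub_le _ _) a.2⟩ with ha0
  have key : ∀ p : Fin (m - 1), Rmat m a p * X p =
      (if (p : ℕ) = ((a0 : Fin (m-1)) : ℕ) then Real.sin θ * X p else 0)
        + (if (p : ℕ) = (a : ℕ) then Real.cos θ * X p else 0) := by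
    intro p
    have hmod : ((a : ℕ) % 2 = 0) = False := by simp [ha]
    have hθ' : (2 * Real.pi * (((a : ℕ) / 2 : ℕ) + 1) / m : ℝ) = θ := rfl
    simp only [Rmat, Matrix.of_apply, hmod, if_false, hθ']
    have hne : ((a : ℕ) - 1 = (a : ℕ)) = False := by simp; omega
    have hne' : ((a : ℕ) = (a : ℕ) - 1) = False := by simp; omega
    by_cases hc1 : (p : ℕ) = (a : ℕ) - 1
    · have hc2 : ¬ ((p : ℕ) = (a : ℕ)) := by omega
      simp [hc1, hc2, hne, hne', ha0]
    · by_cases hc2 : (p : ℕ) = (a : ℕ) <;> simp [hc1, hc2, hne, hne', ha0]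
  have hs : (Rmat m).mulVec X a = ∑ p, Rmat m a p * X p := rfl
  rw [hs, Finset.sum_congr rfl (fun p _ => key p), Finset.sum_add_distrib,
    sum_ite_coe m a0, sum_ite_coe m a]

lemma Rmat_mulVec_last (m : ℕ) (X : Fin (m - 1) → ℝ) (a : Fin (m - 1))
    (ha : (a : ℕ) % 2 = 0) (h1 : ¬ ((a : ℕ) + 1 < m - 1)) :
    (Rmat m).mulVec X a = - X a := by
  classical
  have key : ∀ p : Fin (m - 1), Rmat m a p * X p =
      (if p = a then -X a else 0) := by
    intro p
    have hmod2 : ((a : ℕ) + 1 < m - 1) = False := by simp [h1]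
    simp only [Rmat, Matrix.of_apply, ha, if_true, hmod2, if_false]
    rcases eq_or_ne p a with hp | hp
    · subst hp; simp
    · simp [hp]
  have hs : (Rmat m).mulVec X a = ∑ p, Rmat m a p * X p := rfl
  rw [hs, Finset.sum_congr rfl (fun p _ => key p), Finset.sum_ite_eq']
  simp

lemma pow_mulVec_even (m t : ℕ) (X : Fin (m - 1) → ℝ) (a : Fin (m - 1))
    (ha : (a : ℕ) % 2 = 0) (h1 : (a : ℕ) + 1 < m - 1) :
    ((Rmat m ^ t).mulVec X) a =
        Real.cos (t * ang m ((a : ℕ) / 2)) * X a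
          - Real.sin (t * ang m ((a : ℕ) / 2)) * X ⟨(a : ℕ) + 1, h1⟩
      ∧ ((Rmat m ^ t).mulVec X) ⟨(a : ℕ) + 1, h1⟩ =
        Real.sin (t * ang m ((a : ℕ) / 2)) * X a
          + Real.cos (t * ang m ((a : ℕ) / 2)) * X ⟨(a : ℕ) + 1, h1⟩ := by
  induction t generalizing X with
  | zero => simp [Matrix.one_mulVec]
  | succ t ih =>
    have hstep : (Rmat m ^ (t + 1)).mulVec X = (Rmat m ^ t).mulVec ((Rmat m).mulVec X) := by
      rw [pow_succ, ← Matrix.mulVec_mulVec]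
    set θ := ang m ((a : ℕ) / 2) with hθdef
    set Y := (Rmat m).mulVec X with hY
    have hYa : Y a = Real.cos θ * X a - Real.sin θ * X ⟨(a : ℕ) + 1, h1⟩ :=
      Rmat_mulVec_even m X a ha h1
    have ha1 : ((⟨(a : ℕ) + 1, h1⟩ : Fin (m - 1)) : ℕ) % 2 = 1 := by simp; omega
    have hYa1 : Y ⟨(a : ℕ) + 1, h1⟩ =
        Real.sin θ * X a + Real.cos θ * X ⟨(a : ℕ) + 1, h1⟩ := by
      have h := Rmat_mulVec_odd m X ⟨(a : ℕ) + 1, h1⟩ ha1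
      have hdiv : ((⟨(a : ℕ) + 1, h1⟩ : Fin (m - 1)) : ℕ) / 2 = (a : ℕ) / 2 := by
        simp; omega
      have hsub : (⟨((⟨(a : ℕ) + 1, h1⟩ : Fin (m - 1)) : ℕ) - 1,
          lt_of_le_of_lt (Nat.sub_le _ _) (⟨(a : ℕ) + 1, h1⟩ : Fin (m - 1)).2⟩
            : Fin (m - 1)) = a := Fin.ext (by simp)
      rw [hdiv, hsub] at h
      exact h
    have hcast : ((t + 1 : ℕ) : ℝ) * θ = (t : ℝ) * θ + θ := by push_cast; ring
    obtain ⟨ih1, ih2⟩ := ih Y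
    rw [hstep]
    constructor
    · rw [ih1, hYa, hYa1, hcast, Real.cos_add, Real.sin_add]; ring
    · rw [ih2, hYa, hYa1, hcast, Real.cos_add, Real.sin_add]; ring

lemma pow_mulVec_odd (m t : ℕ) (X : Fin (m - 1) → ℝ) (a : Fin (m - 1))
    (ha : (a : ℕ) % 2 = 1) :
    ((Rmat m ^ t).mulVec X) a =
      Real.sin (t * ang m ((a : ℕ) / 2))
          * X ⟨(a : ℕ) - 1, lt_of_le_of_lt (Nat.sub_le _ _) a.2⟩
        + Real.cos (t * ang m ((a : ℕ) / 2)) * X a := by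
  have h0 : ((a : ℕ) - 1) % 2 = 0 := by omega
  have hlt : (a : ℕ) - 1 < m - 1 := lt_of_le_of_lt (Nat.sub_le _ _) a.2
  have h1 : ((⟨(a : ℕ) - 1, hlt⟩ : Fin (m - 1)) : ℕ) + 1 < m - 1 := by
    have := a.2; simp; omega
  have h := (pow_mulVec_even m t X ⟨(a : ℕ) - 1, hlt⟩ h0 h1).2
  have hdiv : ((a : ℕ) - 1) / 2 = (a : ℕ) / 2 := by omega
  have hsub : (⟨((⟨(a : ℕ) - 1, hlt⟩ : Fin (m - 1)) : ℕ) + 1, h1⟩ : Fin (m - 1)) = a :=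
    Fin.ext (by simp; omega)
  rw [hsub] at h
  simpa [hdiv] using h

lemma pow_mulVec_last (m t : ℕ) (X : Fin (m - 1) → ℝ) (a : Fin (m - 1))
    (ha : (a : ℕ) % 2 = 0) (h1 : ¬ ((a : ℕ) + 1 < m - 1)) :
    ((Rmat m ^ t).mulVec X) a = (-1 : ℝ) ^ t * X a := by
  induction t generalizing X with
  | zero => simp [Matrix.one_mulVec]
  | succ t ih =>
    have hstep : (Rmat m ^ (t + 1)).mulVec X = (Rmat m ^ t).mulVec ((Rmat m).mulVec X) := by
      rw [pow_succ, ← Matrix.mulVec_mulVec]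
    rw [hstep, ih ((Rmat m).mulVec X), Rmat_mulVec_last m X a ha h1]
    ring

lemma Rmat_pow_self (m : ℕ) (hm : 2 ≤ m) : Rmat m ^ m = 1 := by
  have hv : ∀ X : Fin (m - 1) → ℝ, (Rmat m ^ m).mulVec X = X := by
    intro X
    funext a
    have hang : ∀ b : ℕ, (m : ℝ) * ang m b = ((b + 1 : ℕ) : ℝ) * (2 * Real.pi) := by
      intro b
      have hm0 : (m : ℝ) ≠ 0 := Nat.cast_ne_zero.mpr (by omega)
      unfold ang
      push_cast
      field_simp
    have hcos : ∀ b : ℕ, Real.cos ((m : ℝ) * ang m b) = 1 := by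
      intro b; rw [hang b, Real.cos_nat_mul_two_pi]
    have hsin : ∀ b : ℕ, Real.sin ((m : ℝ) * ang m b) = 0 := by
      intro b
      rw [hang b, show (((b + 1 : ℕ) : ℝ)) * (2 * Real.pi) = ((2 * (b + 1) : ℕ) : ℝ) * Real.pi by
        push_cast; ring, Real.sin_nat_mul_pi]
    rcases Nat.even_or_odd (a : ℕ) with he | ho
    · have ha : (a : ℕ) % 2 = 0 := Nat.even_iff.mp he
      by_cases h1 : (a : ℕ) + 1 < m - 1
      · rw [(pow_mulVec_even m m X a ha h1).1, hcos, hsin]; ring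
      · rw [pow_mulVec_last m m X a ha h1]
        have hmeven : m % 2 = 0 := by
          have := a.2; omega
        rw [Even.neg_one_pow (Nat.even_iff.mpr hmeven)]; ring
    · have ha : (a : ℕ) % 2 = 1 := Nat.odd_iff.mp ho
      rw [pow_mulVec_odd m m X a ha, hcos, hsin]; ring
  ext i j
  have h := congrFun (hv (Pi.single j 1)) i
  rw [Matrix.mulVec_single] at h
  simp only [MulOpposite.op_one, one_smul, Matrix.col_apply] at h
  rw [h]
  simp [Matrix.one_apply, Pi.single_apply, eq_comm]

lemma Rmat_zpow_reduce (m : ℕ) (hm : 2 ≤ m) (l : ℤ) :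
    Rmat m ^ l = Rmat m ^ (l % (m : ℤ)).toNat := by
  have hone : Rmat m ^ (m : ℕ) = 1 := Rmat_pow_self m hm
  have hdet : IsUnit (Rmat m).det := by
    have h : (Rmat m).det ^ (m : ℕ) = 1 := by
      rw [← Matrix.det_pow, hone, Matrix.det_one]
    exact IsUnit.of_pow_eq_one h (by omega)
  have hm0 : (m : ℤ) ≠ 0 := by exact_mod_cast (by omega : m ≠ 0)
  have h0 : 0 ≤ l % (m : ℤ) := Int.emod_nonneg l hm0
  calc Rmat m ^ l = Rmat m ^ ((m : ℤ) * (l / (m : ℤ)) + l % (m : ℤ)) := by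
        rw [Int.mul_ediv_add_emod]
    _ = Rmat m ^ ((m : ℤ) * (l / (m : ℤ))) * Rmat m ^ (l % (m : ℤ)) :=
        Matrix.zpow_add hdet _ _
    _ = (Rmat m ^ (m : ℤ)) ^ (l / (m : ℤ)) * Rmat m ^ (l % (m : ℤ)) := by
        rw [Matrix.zpow_mul _ hdet]
    _ = Rmat m ^ (l % (m : ℤ)) := by
        rw [zpow_natCast, hone, Matrix.one_zpow, one_mul]
    _ = Rmat m ^ (l % (m : ℤ)).toNat := by
        rw [← Int.toNat_of_nonneg h0, zpow_natCast, Int.toNat_of_nonneg h0]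

/-! ### Index bookkeeping -/

/-- Embedding of small indices into big indices. -/
def iot (k i : ℕ) : ℕ := 2 * ((i / 2 + 1) * k - 1) + i % 2

/-- Partial inverse of `iot`. -/
def rho (k a : ℕ) : ℕ := 2 * ((a / 2 + 1) / k - 1) + a % 2

set_option linter.unusedSectionVars false

section Arith

variable {n j k : ℕ} (hj : 2 ≤ j) (hk : 2 ≤ k) (hn : n = j * k)
include hj hk hn

lemma iot_lt {i : ℕ} (hi : i < j - 1) : iot k i < n - 1 := by
  have h2c : 2 * (i / 2 + 1) + i % 2 ≤ j := by omega
  have hmul := mul_le_mul_left h2c k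
  have hK : 2 ≤ (i / 2 + 1) * k := le_trans hk (Nat.le_mul_of_pos_left k (by omega))
  rcases Nat.mod_two_eq_zero_or_one i with h | h
  · have hexp : (2 * (i / 2 + 1) + i % 2) * k = 2 * ((i / 2 + 1) * k) := by rw [h]; ring
    unfold iot; omega
  · have hexp : (2 * (i / 2 + 1) + i % 2) * k = 2 * ((i / 2 + 1) * k) + k := by rw [h]; ring
    unfold iot; omega

lemma iot_K_pos (i : ℕ) : 2 ≤ (i / 2 + 1) * k :=
  le_trans hk (Nat.le_mul_of_pos_left k (by omega))

lemma iot_mod (i : ℕ) : iot k i % 2 = i % 2 := by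
  have hK := iot_K_pos hj hk hn i
  unfold iot; omega

lemma iot_div_succ (i : ℕ) : iot k i / 2 + 1 = (i / 2 + 1) * k := by
  have hK := iot_K_pos hj hk hn i
  unfold iot; omega

lemma iot_succ {i : ℕ} (hi : i % 2 = 0) : iot k (i + 1) = iot k i + 1 := by
  have hK := iot_K_pos hj hk hn i
  unfold iot
  have h2 : (i + 1) / 2 = i / 2 := by omega
  rw [h2]
  omega

lemma iot_pred {i : ℕ} (hi : i % 2 = 1) : iot k (i - 1) + 1 = iot k i := by
  have hK := iot_K_pos hj hk hn i
  unfold iot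
  have h2 : (i - 1) / 2 = i / 2 := by omega
  rw [h2]
  omega

lemma iot_dvd (i : ℕ) : k ∣ (iot k i / 2 + 1) := by
  rw [iot_div_succ hj hk hn]
  exact dvd_mul_left k _

lemma rho_iot (i : ℕ) : rho k (iot k i) = i := by
  unfold rho
  rw [iot_div_succ hj hk hn, Nat.mul_div_cancel _ (by omega : 0 < k),
    iot_mod hj hk hn]
  omega

lemma rho_eq {a c : ℕ} (hc : a / 2 + 1 = c * k) : rho k a = 2 * (c - 1) + a % 2 := by
  unfold rho
  rw [hc, Nat.mul_div_cancel _ (by omega : 0 < k)]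

lemma rho_lt {a c : ℕ} (ha : a < n - 1) (hc : a / 2 + 1 = c * k) : rho k a < j - 1 := by
  have hc1 : 1 ≤ c := by
    rcases Nat.eq_zero_or_pos c with h | h
    · subst h; rw [zero_mul] at hc; omega
    · exact h
  rw [rho_eq hj hk hn hc]
  rcases Nat.mod_two_eq_zero_or_one a with h | h
  · have hle : (2 * c) * k ≤ j * k := by
      have e : (2 * c) * k = 2 * (c * k) := by ring
      omega
    have h2c : 2 * c ≤ j := Nat.le_of_mul_le_mul_right hle (by omega)
    omega
  · have h2c : 2 * c < j := by
      by_contra hcon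
      push_neg at hcon
      have := mul_le_mul_left hcon k
      have e : (2 * c) * k = 2 * (c * k) := by ring
      omega
    omega

lemma iot_rho {a c : ℕ} (hc : a / 2 + 1 = c * k) : iot k (rho k a) = a := by
  have hc1 : 1 ≤ c := by
    rcases Nat.eq_zero_or_pos c with h | h
    · subst h; rw [zero_mul] at hc; omega
    · exact h
  rw [rho_eq hj hk hn hc]
  unfold iot
  have h3 : (2 * (c - 1) + a % 2) / 2 + 1 = c := by omega
  rw [h3]
  omega

lemma rho_lt' {a : ℕ} (ha : a < n - 1) (h : k ∣ (a / 2 + 1)) : rho k a < j - 1 := by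
  obtain ⟨c, hc⟩ := h
  exact rho_lt hj hk hn (c := c) ha (hc.trans (Nat.mul_comm k c))

lemma iot_rho' {a : ℕ} (h : k ∣ (a / 2 + 1)) : iot k (rho k a) = a := by
  obtain ⟨c, hc⟩ := h
  exact iot_rho hj hk hn (a := a) (c := c) (hc.trans (Nat.mul_comm k c))

lemma iot_last (hje : j % 2 = 0) : iot k (j - 2) = n - 2 := by
  unfold iot
  have h1 : (j - 2) / 2 + 1 = j / 2 := by omega
  rw [h1]
  have e : 2 * ((j / 2) * k) = (2 * (j / 2)) * k := by ring
  have e2 : 2 * (j / 2) = j := by omega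
  rw [e2] at e
  have hK : 1 ≤ (j / 2) * k := Nat.mul_pos (by omega) (by omega)
  omega

lemma j_even_iff_n_even (hko : k % 2 = 1) : j % 2 = n % 2 := by
  have h := Nat.mul_mod j k 2
  rw [hko] at h
  rw [hn] at *
  omega

lemma dvd_last (hje : j % 2 = 0) : k ∣ ((n - 2) / 2 + 1) := by
  have e : n = 2 * ((j / 2) * k) := by
    rw [hn]
    have : 2 * (j / 2) = j := by omega
    calc j * k = (2 * (j / 2)) * k := by rw [this]
      _ = 2 * ((j / 2) * k) := by ring
  have hK : 1 ≤ (j / 2) * k := Nat.mul_pos (by omega) (by omega)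
  have h2 : (n - 2) / 2 + 1 = (j / 2) * k := by omega
  rw [h2]
  exact dvd_mul_left k _

end Arith

/-! ### Interaction of `Rmat` with the index embedding -/

lemma sin_nat_two_pi (c : ℕ) : Real.sin ((c : ℝ) * (2 * Real.pi)) = 0 := by
  rw [show ((c : ℝ)) * (2 * Real.pi) = ((2 * c : ℕ) : ℝ) * Real.pi by push_cast; ring,
    Real.sin_nat_mul_pi]

section Main

variable {n j k : ℕ} (hj : 2 ≤ j) (hk : 2 ≤ k) (hn : n = j * k)
include hj hk hn

lemma ang_eq {B b' : ℕ} (hB : B + 1 = (b' + 1) * k) : ang n B = ang j b' := by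
  have hkr : (k : ℝ) ≠ 0 := Nat.cast_ne_zero.mpr (by omega)
  have hjr : (j : ℝ) ≠ 0 := Nat.cast_ne_zero.mpr (by omega)
  have hnr : (n : ℝ) = (j : ℝ) * k := by rw [hn]; push_cast; ring
  have hBr : ((B : ℝ) + 1) = ((b' : ℝ) + 1) * k := by exact_mod_cast congrArg (Nat.cast : ℕ → ℝ) hB
  unfold ang
  rw [hnr, hBr]
  field_simp

lemma T_val {a c : ℕ} (hc : a + 1 = c * k) :
    (j : ℝ) * ang n a = (c : ℝ) * (2 * Real.pi) := by
  have hkr : (k : ℝ) ≠ 0 := Nat.cast_ne_zero.mpr (by omega)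
  have hjr : (j : ℝ) ≠ 0 := Nat.cast_ne_zero.mpr (by omega)
  have hnr : (n : ℝ) = (j : ℝ) * k := by rw [hn]; push_cast; ring
  have hcr : ((a : ℝ) + 1) = (c : ℝ) * k := by exact_mod_cast congrArg (Nat.cast : ℕ → ℝ) hc
  unfold ang
  rw [hnr, hcr]
  field_simp

lemma cosT_ne_one {a : ℕ} (hnd : ¬ k ∣ (a + 1)) :
    Real.cos ((j : ℝ) * ang n a) ≠ 1 := by
  intro hct
  rw [Real.cos_eq_one_iff] at hct
  obtain ⟨z, hz⟩ := hct
  have hkr : (k : ℝ) ≠ 0 := Nat.cast_ne_zero.mpr (by omega)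
  have hjr : (j : ℝ) ≠ 0 := Nat.cast_ne_zero.mpr (by omega)
  have hπ : Real.pi ≠ 0 := Real.pi_ne_zero
  have hnr : (n : ℝ) = (j : ℝ) * k := by rw [hn]; push_cast; ring
  have hT : (j : ℝ) * ang n a = 2 * Real.pi * ((a : ℝ) + 1) / k := by
    unfold ang; rw [hnr]; field_simp
  rw [hT] at hz
  have h2 : (2 * Real.pi) ≠ 0 := by positivity
  have hzk : (z : ℝ) * k = (a : ℝ) + 1 := by
    apply mul_right_cancel₀ h2
    field_simp at hz
    linear_combination (2 * Real.pi) * hz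
  have hzint : (z * (k : ℤ)) = ((a : ℤ) + 1) := by exact_mod_cast hzk
  have hz0 : 0 ≤ z := by
    nlinarith [hzint, (show (2 : ℤ) ≤ (k : ℤ) from by exact_mod_cast hk)]
  lift z to ℕ using hz0 with w
  have hw : w * k = a + 1 := by exact_mod_cast hzint
  exact hnd ⟨w, by rw [Nat.mul_comm]; omega⟩

lemma vanish_pair (X : Fin (n - 1) → ℝ) (hfix : (Rmat n ^ j).mulVec X = X)
    (a : Fin (n - 1)) (haev : (a : ℕ) % 2 = 0) (h1 : (a : ℕ) + 1 < n - 1)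
    (hnd : ¬ k ∣ ((a : ℕ) / 2 + 1)) :
    X a = 0 ∧ X ⟨(a : ℕ) + 1, h1⟩ = 0 := by
  set T := (j : ℝ) * ang n ((a : ℕ) / 2) with hT
  have e1 := (pow_mulVec_even n j X a haev h1).1
  have e2 := (pow_mulVec_even n j X a haev h1).2
  rw [hfix] at e1 e2
  have hp := Real.sin_sq_add_cos_sq T
  have hcos : Real.cos T ≠ 1 := cosT_ne_one hj hk hn (by simpa using hnd)
  have hne : (2 - 2 * Real.cos T) ≠ 0 := by
    intro h
    apply hcos
    linarith
  constructor
  · have key : (2 - 2 * Real.cos T) * X a = 0 := by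
      linear_combination (1 - Real.cos T) * e1 - Real.sin T * e2 - X a * hp
    rcases mul_eq_zero.mp key with h | h
    · exact absurd h hne
    · exact h
  · have key : (2 - 2 * Real.cos T) * X ⟨(a : ℕ) + 1, h1⟩ = 0 := by
      linear_combination Real.sin T * e1 + (1 - Real.cos T) * e2 - X ⟨(a : ℕ) + 1, h1⟩ * hp
    rcases mul_eq_zero.mp key with h | h
    · exact absurd h hne
    · exact h

lemma vanish (hko : k % 2 = 1) (X : Fin (n - 1) → ℝ)
    (hfix : (Rmat n ^ j).mulVec X = X) (a : Fin (n - 1))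
    (hnd : ¬ k ∣ ((a : ℕ) / 2 + 1)) : X a = 0 := by
  rcases Nat.mod_two_eq_zero_or_one (a : ℕ) with haev | haod
  · by_cases h1 : (a : ℕ) + 1 < n - 1
    · exact (vanish_pair hj hk hn X hfix a haev h1 hnd).1
    · exfalso
      have ha2 := a.2
      have hlast : (a : ℕ) = n - 2 := by omega
      have hne : n % 2 = 0 := by omega
      have hje : j % 2 = 0 := by rw [j_even_iff_n_even hj hk hn hko]; exact hne
      apply hnd
      rw [hlast]
      exact dvd_last hj hk hn hje
  · have hlt : (a : ℕ) - 1 < n - 1 := lt_of_le_of_lt (Nat.sub_le _ _) a.2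
    have h0 : ((⟨(a : ℕ) - 1, hlt⟩ : Fin (n - 1)) : ℕ) % 2 = 0 := by simp; omega
    have h1 : ((⟨(a : ℕ) - 1, hlt⟩ : Fin (n - 1)) : ℕ) + 1 < n - 1 := by
      have := a.2; simp; omega
    have hnd' : ¬ k ∣ (((⟨(a : ℕ) - 1, hlt⟩ : Fin (n - 1)) : ℕ) / 2 + 1) := by
      have hdveq : ((a : ℕ) - 1) / 2 = (a : ℕ) / 2 := by omega
      simpa [hdveq] using hnd
    have h := (vanish_pair hj hk hn X hfix _ h0 h1 hnd').2
    have hsub : (⟨((⟨(a : ℕ) - 1, hlt⟩ : Fin (n - 1)) : ℕ) + 1, h1⟩ : Fin (n - 1)) = a :=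
      Fin.ext (by simp; omega)
    rwa [hsub] at h

lemma supp_pow (t : ℕ) (X : Fin (n - 1) → ℝ)
    (hX : ∀ a : Fin (n - 1), ¬ k ∣ ((a : ℕ) / 2 + 1) → X a = 0)
    (a : Fin (n - 1)) (hnd : ¬ k ∣ ((a : ℕ) / 2 + 1)) :
    ((Rmat n ^ t).mulVec X) a = 0 := by
  rcases Nat.mod_two_eq_zero_or_one (a : ℕ) with haev | haod
  · by_cases h1 : (a : ℕ) + 1 < n - 1
    · rw [(pow_mulVec_even n t X a haev h1).1, hX a hnd, hX ⟨(a : ℕ) + 1, h1⟩ (by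
        have : ((a : ℕ) + 1) / 2 = (a : ℕ) / 2 := by omega
        simpa [this] using hnd)]
      ring
    · rw [pow_mulVec_last n t X a haev h1, hX a hnd]; ring
  · rw [pow_mulVec_odd n t X a haod, hX a hnd,
      hX ⟨(a : ℕ) - 1, lt_of_le_of_lt (Nat.sub_le _ _) a.2⟩ (by
        have : ((a : ℕ) - 1) / 2 = (a : ℕ) / 2 := by omega
        simpa [this] using hnd)]
    ring

lemma fixed_supp (hko : k % 2 = 1) (X : Fin (n - 1) → ℝ)
    (hX : ∀ a : Fin (n - 1), ¬ k ∣ ((a : ℕ) / 2 + 1) → X a = 0) :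
    (Rmat n ^ j).mulVec X = X := by
  funext a
  rcases Nat.mod_two_eq_zero_or_one (a : ℕ) with haev | haod
  · by_cases h1 : (a : ℕ) + 1 < n - 1
    · by_cases hd : k ∣ ((a : ℕ) / 2 + 1)
      · obtain ⟨c, hc⟩ := hd
        have hT := T_val hj hk hn (a := (a : ℕ) / 2) (c := c) (hc.trans (Nat.mul_comm k c))
        rw [(pow_mulVec_even n j X a haev h1).1, hT, Real.cos_nat_mul_two_pi,
          sin_nat_two_pi]
        ring
      · rw [(pow_mulVec_even n j X a haev h1).1, hX a hd, hX ⟨(a : ℕ) + 1, h1⟩ (by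
          have : ((a : ℕ) + 1) / 2 = (a : ℕ) / 2 := by omega
          simpa [this] using hd)]
        ring
    · rw [pow_mulVec_last n j X a haev h1]
      have ha2 := a.2
      have hne : n % 2 = 0 := by omega
      have hje : j % 2 = 0 := by rw [j_even_iff_n_even hj hk hn hko]; exact hne
      rw [Even.neg_one_pow (Nat.even_iff.mpr hje)]
      ring
  · by_cases hd : k ∣ ((a : ℕ) / 2 + 1)
    · obtain ⟨c, hc⟩ := hd
      have hT := T_val hj hk hn (a := (a : ℕ) / 2) (c := c) (hc.trans (Nat.mul_comm k c))
      rw [pow_mulVec_odd n j X a haod, hT, Real.cos_nat_mul_two_pi, sin_nat_two_pi]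
      ring
    · rw [pow_mulVec_odd n j X a haod, hX a hd,
        hX ⟨(a : ℕ) - 1, lt_of_le_of_lt (Nat.sub_le _ _) a.2⟩ (by
          have : ((a : ℕ) - 1) / 2 = (a : ℕ) / 2 := by omega
          simpa [this] using hd)]
      ring

lemma comm_pow (t : ℕ) (X : Fin (n - 1) → ℝ) (i : Fin (j - 1)) :
    ((Rmat n ^ t).mulVec X) ⟨iot k (i : ℕ), iot_lt hj hk hn i.2⟩ =
      ((Rmat j ^ t).mulVec
        (fun i' : Fin (j - 1) => X ⟨iot k (i' : ℕ), iot_lt hj hk hn i'.2⟩)) i := by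
  set Y : Fin (j - 1) → ℝ := fun i' => X ⟨iot k (i' : ℕ), iot_lt hj hk hn i'.2⟩ with hYdef
  set A : Fin (n - 1) := ⟨iot k (i : ℕ), iot_lt hj hk hn i.2⟩ with hA
  have hAval : (A : ℕ) = iot k (i : ℕ) := rfl
  have hAmod : (A : ℕ) % 2 = (i : ℕ) % 2 := by rw [hAval, iot_mod hj hk hn]
  rcases Nat.mod_two_eq_zero_or_one (i : ℕ) with hiev | hiod
  · by_cases h1 : (i : ℕ) + 1 < j - 1
    · -- rotation pair case
      have hsucc : iot k ((i : ℕ) + 1) = iot k (i : ℕ) + 1 := iot_succ hj hk hn hiev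
      have hA1 : (A : ℕ) + 1 < n - 1 := by
        rw [hAval, ← hsucc]
        exact iot_lt hj hk hn h1
      have hang : ang n ((A : ℕ) / 2) = ang j ((i : ℕ) / 2) := by
        apply ang_eq hj hk hn
        rw [hAval]
        have := iot_div_succ hj hk hn (k := k) (i : ℕ)
        omega
      rw [(pow_mulVec_even n t X A (by omega) hA1).1,
        (pow_mulVec_even j t Y i hiev h1).1, hang]
      have hXA1 : X ⟨(A : ℕ) + 1, hA1⟩ = Y ⟨(i : ℕ) + 1, h1⟩ := by
        simp only [hYdef]
        congr 1
        exact Fin.ext (by rw [hAval] at *; simp [hsucc, hA])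
      rw [hXA1]
    · -- last coordinate case
      have hieq : (i : ℕ) = j - 2 := by have := i.2; omega
      have hje : j % 2 = 0 := by omega
      have hAlast : (A : ℕ) = n - 2 := by rw [hAval, hieq, iot_last hj hk hn hje]
      have hAn : ¬ ((A : ℕ) + 1 < n - 1) := by omega
      rw [pow_mulVec_last n t X A (by omega) hAn, pow_mulVec_last j t Y i hiev h1]
  · -- odd case
    have hpred : iot k ((i : ℕ) - 1) + 1 = iot k (i : ℕ) := iot_pred hj hk hn hiod
    have hang : ang n ((A : ℕ) / 2) = ang j ((i : ℕ) / 2) := by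
      apply ang_eq hj hk hn
      rw [hAval]
      have := iot_div_succ hj hk hn (k := k) (i : ℕ)
      omega
    rw [pow_mulVec_odd n t X A (by omega), pow_mulVec_odd j t Y i hiod, hang]
    have hXA0 : X ⟨(A : ℕ) - 1, lt_of_le_of_lt (Nat.sub_le _ _) A.2⟩ =
        Y ⟨(i : ℕ) - 1, lt_of_le_of_lt (Nat.sub_le _ _) i.2⟩ := by
      simp only [hYdef]
      congr 1
      exact Fin.ext (by rw [hAval] at *; simp [hA]; omega)
    rw [hXA0]

lemma sum_transfer (G : Fin (n - 1) → ℝ)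
    (hG : ∀ a : Fin (n - 1), ¬ k ∣ ((a : ℕ) / 2 + 1) → G a = 0) :
    ∑ a, G a = ∑ i : Fin (j - 1), G ⟨iot k (i : ℕ), iot_lt hj hk hn i.2⟩ := by
  classical
  have hj1 : 0 < j - 1 := by omega
  rw [← Finset.sum_filter_of_ne
    (p := fun a : Fin (n - 1) => k ∣ ((a : ℕ) / 2 + 1))
    (fun x _ hx => by by_contra h; exact hx (hG x h))]
  refine Finset.sum_nbij'
    (i := fun a : Fin (n - 1) =>
      if h : k ∣ ((a : ℕ) / 2 + 1) then (⟨rho k (a : ℕ), rho_lt' hj hk hn a.2 h⟩ : Fin (j - 1))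
      else ⟨0, hj1⟩)
    (j := fun i' : Fin (j - 1) => ⟨iot k (i' : ℕ), iot_lt hj hk hn i'.2⟩)
    ?_ ?_ ?_ ?_ ?_
  · intro a _
    exact Finset.mem_univ _
  · intro i' _
    simp only [Finset.mem_filter, Finset.mem_univ, true_and]
    exact iot_dvd hj hk hn _
  · intro a ha
    simp only [Finset.mem_filter, Finset.mem_univ, true_and] at ha
    rw [dif_pos ha]
    exact Fin.ext (iot_rho' hj hk hn ha)
  · intro i' _
    have hd : k ∣ (iot k (i' : ℕ) / 2 + 1) := iot_dvd hj hk hn _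
    dsimp only
    rw [dif_pos hd]
    exact Fin.ext (rho_iot hj hk hn _)
  · intro a ha
    simp only [Finset.mem_filter, Finset.mem_univ, true_and] at ha
    rw [dif_pos ha]
    congr 1
    exact Fin.ext (iot_rho' hj hk hn ha).symm

end Main

end EllPlusAux

/-- For a proper divisor `j ≥ 2` of `n` with `k = n/j` odd, the quotient
`ℓ₊^j(n)/⟨ℛ_n, ν⟩` is homeomorphic to `S^{j-2}/⟨ℛ_j, ν⟩` (that is, to `𝓛(j)`). -/
theorem ellPlus_quotient_homeomorph (n j k : ℕ) (hn : 3 ≤ n) (hj : 2 ≤ j) (hjn : j < n)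
    (hdvd : j ∣ n) (hk : k = n / j) (hkodd : Odd k) :
    Nonempty (Quot (apxRelPlus n j) ≃ₜ Quot (apxRelSmall j)) := by
  classical
  obtain ⟨k', hn'⟩ := hdvd
  have hkk : k = k' := by
    rw [hk, hn', Nat.mul_div_cancel_left k' (by omega : 0 < j)]
  subst hkk
  have hj2 : 2 ≤ j := hj
  have hk2 : 2 ≤ k := by
    rcases Nat.lt_or_ge k 2 with h | h
    · interval_cases k
      · rw [Nat.mul_zero] at hn'; omega
      · rw [Nat.mul_one] at hn'; omega
    · exact h
  have hko : k % 2 = 1 := Nat.odd_iff.mp hkodd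
  set ι : Fin (j - 1) → Fin (n - 1) :=
    fun i => ⟨EllPlusAux.iot k (i : ℕ), EllPlusAux.iot_lt hj2 hk2 hn' i.2⟩ with hιdef
  -- the forward map
  let f : ellPlus n j → {v : Fin (j - 1) → ℝ // ∑ i, (v i) ^ 2 = 1} :=
    fun X => ⟨fun i => X.1 (ι i), by
      have hv : ∀ a : Fin (n - 1), ¬ (k ∣ ((a : ℕ) / 2 + 1)) → (X.1 a) ^ 2 = 0 :=
        fun a ha => by
          rw [EllPlusAux.vanish hj2 hk2 hn' hko X.1 X.2.2 a ha]; ring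
      exact (EllPlusAux.sum_transfer hj2 hk2 hn'
        (fun a => (X.1 a) ^ 2) hv).symm.trans X.2.1⟩
  -- the backward map, as a bare function on vectors first
  let gfun : {v : Fin (j - 1) → ℝ // ∑ i, (v i) ^ 2 = 1} → (Fin (n - 1) → ℝ) :=
    fun U a => if h : k ∣ ((a : ℕ) / 2 + 1)
      then U.1 ⟨EllPlusAux.rho k (a : ℕ), EllPlusAux.rho_lt' hj2 hk2 hn' a.2 h⟩ else 0
  have hgsupp : ∀ U (a : Fin (n - 1)), ¬ k ∣ ((a : ℕ) / 2 + 1) → gfun U a = 0 :=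
    fun U a ha => dif_neg ha
  have hgι : ∀ U i, gfun U (ι i) = U.1 i := by
    intro U i
    have hd : k ∣ (((ι i : Fin (n - 1)) : ℕ) / 2 + 1) := EllPlusAux.iot_dvd hj2 hk2 hn' i
    show dite _ _ _ = _
    rw [dif_pos hd]
    exact congrArg U.1 (Fin.ext (EllPlusAux.rho_iot hj2 hk2 hn' (i : ℕ)))
  have hgsum : ∀ U, ∑ a, (gfun U a) ^ 2 = 1 := by
    intro U
    have hv : ∀ a : Fin (n - 1), ¬ (k ∣ ((a : ℕ) / 2 + 1)) → (gfun U a) ^ 2 = 0 :=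
      fun a ha => by rw [hgsupp U a ha]; ring
    have h2 : ∑ i : Fin (j - 1), (gfun U (ι i)) ^ 2 = ∑ i, (U.1 i) ^ 2 :=
      Finset.sum_congr rfl (fun i _ => by rw [hgι U i])
    exact ((EllPlusAux.sum_transfer hj2 hk2 hn' (fun a => (gfun U a) ^ 2) hv).trans
      h2).trans U.2
  let g : {v : Fin (j - 1) → ℝ // ∑ i, (v i) ^ 2 = 1} → ellPlus n j :=
    fun U => ⟨gfun U, hgsum U,
      EllPlusAux.fixed_supp hj2 hk2 hn' hko (gfun U) (hgsupp U)⟩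
  -- inverse properties
  have hgf : ∀ X : ellPlus n j, g (f X) = X := by
    intro X
    apply Subtype.ext
    funext a
    show gfun (f X) a = X.1 a
    by_cases hd : k ∣ ((a : ℕ) / 2 + 1)
    · show dite _ _ _ = _
      rw [dif_pos hd]
      show X.1 (ι ⟨EllPlusAux.rho k (a : ℕ), _⟩) = X.1 a
      exact congrArg X.1 (Fin.ext (EllPlusAux.iot_rho' hj2 hk2 hn' hd))
    · show dite _ _ _ = _
      rw [dif_neg hd]
      exact (EllPlusAux.vanish hj2 hk2 hn' hko X.1 X.2.2 a hd).symm
  have hfg : ∀ U, f (g U) = U := by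
    intro U
    apply Subtype.ext
    funext i
    exact hgι U i
  have hcomm : ∀ (t : ℕ) (X : Fin (n - 1) → ℝ) (i : Fin (j - 1)),
      ((Rmat n ^ t).mulVec X) (ι i) = ((Rmat j ^ t).mulVec (fun i' => X (ι i'))) i :=
    fun t X i => EllPlusAux.comm_pow hj2 hk2 hn' t X i
  -- relations are matched
  have hrel1 : ∀ X Y, apxRelPlus n j X Y → apxRelSmall j (f X) (f Y) := by
    rintro X Y ⟨l, ε, hε, hYX⟩
    refine ⟨(((l % (n : ℤ)).toNat : ℕ) : ℤ), ε, hε, ?_⟩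
    have hred : (Rmat n) ^ l = Rmat n ^ ((l % (n : ℤ)).toNat) :=
      EllPlusAux.Rmat_zpow_reduce n (by omega) l
    funext i
    calc (f Y).1 i = (Y : Fin (n - 1) → ℝ) (ι i) := rfl
      _ = (ε • ((Rmat n ^ l).mulVec (X : Fin (n - 1) → ℝ))) (ι i) := by rw [hYX]
      _ = ε * ((Rmat n ^ ((l % (n : ℤ)).toNat)).mulVec (X : Fin (n - 1) → ℝ)) (ι i) := by
          rw [hred]; simp
      _ = ε * ((Rmat j ^ ((l % (n : ℤ)).toNat)).mulVec (fun i' => (X : Fin (n - 1) → ℝ) (ι i'))) i := by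
          rw [hcomm]
      _ = (ε • ((Rmat j ^ (((l % (n : ℤ)).toNat : ℕ) : ℤ)).mulVec (f X).1)) i := by
          rw [zpow_natCast]; simp; exact Or.inl rfl
  have hrel2 : ∀ U V, apxRelSmall j U V → apxRelPlus n j (g U) (g V) := by
    rintro U V ⟨l, ε, hε, hVU⟩
    refine ⟨(((l % (j : ℤ)).toNat : ℕ) : ℤ), ε, hε, ?_⟩
    have hred : (Rmat j) ^ l = Rmat j ^ ((l % (j : ℤ)).toNat) :=
      EllPlusAux.Rmat_zpow_reduce j (by omega) l
    set t := (l % (j : ℤ)).toNat with htdef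
    have hVU' : (V : Fin (j - 1) → ℝ) = ε • ((Rmat j ^ t).mulVec (U : Fin (j - 1) → ℝ)) := by
      rw [hVU, hred]
    have hUeq : (fun i' => gfun U (ι i')) = (U : Fin (j - 1) → ℝ) :=
      funext fun i' => hgι U i'
    funext a
    show gfun V a = (ε • ((Rmat n ^ ((t : ℕ) : ℤ)).mulVec (gfun U))) a
    rw [zpow_natCast]
    by_cases hd : k ∣ ((a : ℕ) / 2 + 1)
    · have hb : EllPlusAux.rho k (a : ℕ) < j - 1 := EllPlusAux.rho_lt' hj2 hk2 hn' a.2 hd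
      have haeq : ι ⟨EllPlusAux.rho k (a : ℕ), hb⟩ = a :=
        Fin.ext (EllPlusAux.iot_rho' hj2 hk2 hn' hd)
      calc gfun V a = (V : Fin (j - 1) → ℝ) ⟨EllPlusAux.rho k (a : ℕ), hb⟩ := dif_pos hd
        _ = ε * ((Rmat j ^ t).mulVec (U : Fin (j - 1) → ℝ)) ⟨EllPlusAux.rho k (a : ℕ), hb⟩ := by
            rw [hVU']; simp
        _ = ε * ((Rmat j ^ t).mulVec (fun i' => gfun U (ι i'))) ⟨EllPlusAux.rho k (a : ℕ), hb⟩ := by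
            rw [hUeq]
        _ = ε * ((Rmat n ^ t).mulVec (gfun U)) (ι ⟨EllPlusAux.rho k (a : ℕ), hb⟩) := by
            rw [hcomm]
        _ = (ε • ((Rmat n ^ t).mulVec (gfun U))) a := by rw [haeq]; simp
    · have h0 : ((Rmat n ^ t).mulVec (gfun U)) a = 0 :=
        EllPlusAux.supp_pow hj2 hk2 hn' t (gfun U) (hgsupp U) a hd
      rw [hgsupp V a hd]
      simp [h0]
  -- continuity of the two maps
  have hcf : Continuous f := by
    apply Continuous.subtype_mk
    apply continuous_pi
    intro i
    exact (continuous_apply (ι i)).comp continuous_subtype_val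
  have hcg : Continuous g := by
    apply Continuous.subtype_mk
    apply continuous_pi
    intro a
    by_cases hd : k ∣ ((a : ℕ) / 2 + 1)
    · have heq : (fun U : {v : Fin (j - 1) → ℝ // ∑ i, (v i) ^ 2 = 1} => gfun U a)
          = fun U => U.1 ⟨EllPlusAux.rho k (a : ℕ), EllPlusAux.rho_lt' hj2 hk2 hn' a.2 hd⟩ :=
        funext fun U => dif_pos hd
      show Continuous (fun U => gfun U a)
      rw [heq]
      exact (continuous_apply _).comp continuous_subtype_val
    · have heq : (fun U : {v : Fin (j - 1) → ℝ // ∑ i, (v i) ^ 2 = 1} => gfun U a)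
          = fun _ => (0 : ℝ) := funext fun U => dif_neg hd
      show Continuous (fun U => gfun U a)
      rw [heq]
      exact continuous_const
  -- assemble the homeomorphism of quotients
  let F : Quot (apxRelPlus n j) → Quot (apxRelSmall j) := Quot.map f hrel1
  let G : Quot (apxRelSmall j) → Quot (apxRelPlus n j) := Quot.map g hrel2
  refine ⟨Homeomorph.mk (Equiv.mk F G ?_ ?_) ?_ ?_⟩
  · intro q
    induction q using Quot.ind with
    | _ X => exact congrArg (Quot.mk _) (hgf X)
  · intro q
    induction q using Quot.ind with
    | _ U => exact congrArg (Quot.mk _) (hfg U)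
  · exact isQuotientMap_quot_mk.continuous_iff.mpr (continuous_quot_mk.comp hcf)
  · exact isQuotientMap_quot_mk.continuous_iff.mpr (continuous_quot_mk.comp hcg)
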